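/- arXiv:0801.1376 — 5 statements merged into one kernel-verified Lean document; each statement's English description precedes it below -/
import Mathlib

section
/- Let a > 0 and let h : [0,a] → ℂ be absolutely continuous with derivative g ∈ L²(0,a). Then |h(0)|² ≤ (2/a)·∫₀ᵃ |h(t)|² dt + a·∫₀ᵃ |g(t)|² dt. -/
/-!
For `x ∈ [0,a]` we have `h 0 = h x - ∫₀ˣ g`, and Cauchy–Schwarz gives
`‖∫₀ˣ g‖² ≤ x ∫₀ᵃ ‖g‖²`, so `‖h 0‖² ≤ 2‖h x‖² + 2x ∫₀ᵃ ‖g‖²`.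
Averaging this over `x ∈ [0,a]` gives the estimate, since `∫₀ᵃ x dx = a²/2`.
-/

open MeasureTheory Set

theorem sq_norm_integral_le_measureReal_mul {α E : Type*} [MeasurableSpace α] {μ : Measure α}
    [IsFiniteMeasure μ] [NormedAddCommGroup E] [NormedSpace ℝ E] {f : α → E}
    (hf : MemLp f 2 μ) :
    ‖∫ x, f x ∂μ‖ ^ 2 ≤ μ.real univ * ∫ x, ‖f x‖ ^ 2 ∂μ := by
  have hCS := integral_mul_le_Lp_mul_Lq_of_nonneg Real.HolderConjugate.two_two
    (ae_of_all μ fun x => norm_nonneg (f x)) (ae_of_all μ fun _ => zero_le_one)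
    (by simpa using hf.norm) (memLp_const (1 : ℝ))
  simp only [mul_one, one_pow, integral_const, smul_eq_mul, Real.rpow_two,
    ← Real.sqrt_eq_rpow] at hCS
  calc ‖∫ x, f x ∂μ‖ ^ 2
      ≤ (√(∫ x, ‖f x‖ ^ 2 ∂μ) * √(μ.real univ)) ^ 2 :=
        pow_le_pow_left₀ (norm_nonneg _) ((norm_integral_le_integral_norm f).trans hCS) 2
    _ = μ.real univ * ∫ x, ‖f x‖ ^ 2 ∂μ := by
        rw [mul_pow, Real.sq_sqrt (integral_nonneg fun _ => sq_nonneg _),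
          Real.sq_sqrt measureReal_nonneg, mul_comm]

section Primitive

variable {E : Type*} [NormedAddCommGroup E] [NormedSpace ℝ E] {h g : ℝ → E} {a b x : ℝ}

theorem sq_norm_intervalIntegral_le (hg : MemLp g 2 (volume.restrict (Ioc a b)))
    (hax : a ≤ x) (hxb : x ≤ b) :
    ‖∫ t in a..x, g t‖ ^ 2 ≤ (x - a) * ∫ t in a..b, ‖g t‖ ^ 2 := by
  have hsub : Ioc a x ⊆ Ioc a b := Ioc_subset_Ioc_right hxb
  have : IsFiniteMeasure (volume.restrict (Ioc a x)) := by
    rw [isFiniteMeasure_restrict]; exact measure_Ioc_lt_top.ne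
  rw [intervalIntegral.integral_of_le hax, intervalIntegral.integral_of_le (hax.trans hxb)]
  calc ‖∫ t in Ioc a x, g t‖ ^ 2 ≤ (x - a) * ∫ t in Ioc a x, ‖g t‖ ^ 2 := by
        simpa [hax] using
          sq_norm_integral_le_measureReal_mul (hg.mono_measure (Measure.restrict_mono hsub le_rfl))
    _ ≤ (x - a) * ∫ t in Ioc a b, ‖g t‖ ^ 2 := by
        gcongr
        · exact ae_of_all _ fun _ => sq_nonneg _
        · exact hg.norm.integrable_sq

theorem sq_norm_le_of_eq_add_intervalIntegral (hg : MemLp g 2 (volume.restrict (Ioc a b)))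
    (hac : ∀ x ∈ Icc a b, h x = h a + ∫ t in a..x, g t) (hx : x ∈ Icc a b) :
    ‖h a‖ ^ 2 ≤ 2 * ‖h x‖ ^ 2 + 2 * (∫ t in a..b, ‖g t‖ ^ 2) * (x - a) := by
  have hprim := sq_norm_intervalIntegral_le hg hx.1 hx.2
  calc ‖h a‖ ^ 2 = ‖h x - ∫ t in a..x, g t‖ ^ 2 := by rw [hac x hx, add_sub_cancel_right]
    _ ≤ 2 * (‖h x‖ ^ 2 + ‖∫ t in a..x, g t‖ ^ 2) :=
      (pow_le_pow_left₀ (norm_nonneg _) (norm_sub_le _ _) 2).trans add_sq_le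
    _ ≤ 2 * ‖h x‖ ^ 2 + 2 * (∫ t in a..b, ‖g t‖ ^ 2) * (x - a) := by linarith

theorem continuousOn_of_eq_add_intervalIntegral (hab : a ≤ b) (hg : IntegrableOn g (Icc a b))
    (hac : ∀ x ∈ Icc a b, h x = h a + ∫ t in a..x, g t) :
    ContinuousOn h (Icc a b) := by
  have hprim := intervalIntegral.continuousOn_primitive_interval (μ := volume) (a := a) (b := b)
    (f := g) (by rwa [uIcc_of_le hab])
  rw [uIcc_of_le hab] at hprim
  exact (continuousOn_const.add hprim).congr hac

end Primitive

/-- **Sobolev trace estimate.** If `h : [0,a] → ℂ` is absolutely continuous with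
derivative `g ∈ L²(0,a)`, then `|h 0|² ≤ (2/a) ∫₀ᵃ |h|² + a ∫₀ᵃ |g|²`. -/
theorem trace_estimate (a : ℝ) (ha : 0 < a) (h g : ℝ → ℂ)
    (hg : MemLp g 2 (volume.restrict (Ioo 0 a)))
    (hac : ∀ x ∈ Icc (0:ℝ) a, h x = h 0 + ∫ t in (0:ℝ)..x, g t) :
    ‖h 0‖ ^ 2 ≤ (2 / a) * (∫ t in (0:ℝ)..a, ‖h t‖ ^ 2)
      + a * (∫ t in (0:ℝ)..a, ‖g t‖ ^ 2) := by
  rw [Measure.restrict_congr_set Ioo_ae_eq_Ioc] at hg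
  set G := ∫ t in (0:ℝ)..a, ‖g t‖ ^ 2
  have hgi : IntegrableOn g (Icc 0 a) :=
    (integrableOn_Icc_iff_integrableOn_Ioc).2 (hg.integrable one_le_two)
  have hh : IntervalIntegrable (fun x => ‖h x‖ ^ 2) volume 0 a :=
    ((continuousOn_of_eq_add_intervalIntegral ha.le hgi hac).norm.pow 2).intervalIntegrable_of_Icc
      ha.le
  have hlin : IntervalIntegrable (fun x : ℝ => 2 * G * x) volume 0 a :=
    (continuous_const.mul continuous_id).intervalIntegrable 0 a
  have hintegrated : a * ‖h 0‖ ^ 2 ≤ 2 * (∫ t in (0:ℝ)..a, ‖h t‖ ^ 2) + a ^ 2 * G := by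
    have := intervalIntegral.integral_mono_on ha.le intervalIntegrable_const
      ((hh.const_mul 2).add hlin) fun x hx => by
        simpa only [sub_zero] using sq_norm_le_of_eq_add_intervalIntegral hg hac hx
    rw [intervalIntegral.integral_const, intervalIntegral.integral_add (hh.const_mul 2) hlin,
      intervalIntegral.integral_const_mul, intervalIntegral.integral_const_mul, integral_id] at this
    simp only [sub_zero, smul_eq_mul, ne_eq, OfNat.ofNat_ne_zero, not_false_eq_true,
      zero_pow] at this
    linarith
  calc ‖h 0‖ ^ 2 = (a * ‖h 0‖ ^ 2) / a := (mul_div_cancel_left₀ _ ha.ne').symm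
    _ ≤ (2 * (∫ t in (0:ℝ)..a, ‖h t‖ ^ 2) + a ^ 2 * G) / a := by gcongr
    _ = _ := by field_simp
end

section
/- Let a > 0 and a ≤ l ≤ 2a. Let V ∈ L²(0,l) and let h : [0,l] → ℂ be absolutely continuous with derivative g ∈ L²(0,l). Then ∫₀ˡ |V(t)h(t)|² dt ≤ (∫₀ˡ |V(t)|² dt) · ((a/2)·∫₀ˡ |g(t)|² dt + (4/a)·∫₀ˡ |h(t)|² dt). -/
/-!
Let `G = ∫ ‖g‖²` and `H = ∫ ‖h‖²` over `[0, l]`. Every `t ∈ [0, l]` lies in a window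
`J ⊆ [0, l]` of length `r = a / 2`. For `s ∈ J`, Cauchy–Schwarz on `h t = h s - ∫ₜˢ g` gives
`‖h t‖² ≤ 2 ‖h s‖² + 2 |s - t| G`, and averaging over `s ∈ J` (where `∫_J |s - t| ≤ r² / 2`)
yields the uniform bound `‖h t‖² ≤ (2 / r) H + r G = (4 / a) H + (a / 2) G`.
Integrating `‖V h‖² ≤ ‖V‖² ‖h‖²` against this bound gives the estimate.
-/

open MeasureTheory Set
open scoped Interval

theorem integral_abs_sub_eq {c d t : ℝ} (ht : t ∈ Icc c d) :
    ∫ s in c..d, |s - t| = ((t - c) ^ 2 + (d - t) ^ 2) / 2 := by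
  rw [intervalIntegral.integral_comp_sub_right (fun x => |x|) t,
    ← intervalIntegral.integral_add_adjacent_intervals (b := 0)
      (continuous_abs.intervalIntegrable _ _) (continuous_abs.intervalIntegrable _ _)]
  have hneg : ∫ x in c - t..0, |x| = ∫ x in c - t..0, -x :=
    intervalIntegral.integral_congr fun x hx => abs_of_nonpos (by
      rw [uIcc_of_le (by linarith [ht.1])] at hx; exact hx.2)
  have hpos : ∫ x in (0:ℝ)..d - t, |x| = ∫ x in (0:ℝ)..d - t, x :=
    intervalIntegral.integral_congr fun x hx => abs_of_nonneg (by
      rw [uIcc_of_le (by linarith [ht.2])] at hx; exact hx.1)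
  rw [hneg, hpos, intervalIntegral.integral_neg, integral_id, integral_id]
  ring

section

variable {α E : Type*} [MeasurableSpace α] [NormedAddCommGroup E] [NormedSpace ℝ E]

theorem norm_integral_sq_le_measureReal_mul {μ : Measure α} [IsFiniteMeasure μ] {f : α → E}
    (hf : MemLp f 2 μ) : ‖∫ x, f x ∂μ‖ ^ 2 ≤ μ.real univ * ∫ x, ‖f x‖ ^ 2 ∂μ := by
  rcases eq_zero_or_neZero μ with rfl | _
  · simp
  have hμpos : 0 < μ.real univ := by
    rw [measureReal_def, ENNReal.toReal_pos_iff]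
    exact ⟨(Measure.measure_univ_pos).2 (NeZero.ne μ), measure_lt_top μ univ⟩
  have hjensen : (⨍ x, ‖f x‖ ∂μ) ^ 2 ≤ ⨍ x, ‖f x‖ ^ 2 ∂μ :=
    (convexOn_pow 2).map_average_le (continuousOn_pow 2) isClosed_Ici
      (ae_of_all _ fun x => norm_nonneg (f x)) (hf.integrable one_le_two).norm
      (hf.integrable_norm_pow two_ne_zero)
  calc ‖∫ x, f x ∂μ‖ ^ 2 ≤ (∫ x, ‖f x‖ ∂μ) ^ 2 := by gcongr; exact norm_integral_le_integral_norm f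
    _ = μ.real univ ^ 2 * (⨍ x, ‖f x‖ ∂μ) ^ 2 := by
        rw [average_eq, smul_eq_mul]; field_simp
    _ ≤ μ.real univ ^ 2 * ⨍ x, ‖f x‖ ^ 2 ∂μ := by gcongr
    _ = μ.real univ * ∫ x, ‖f x‖ ^ 2 ∂μ := by
        rw [average_eq, smul_eq_mul]; field_simp

theorem norm_intervalIntegral_sq_le {g : ℝ → E} {c d : ℝ}
    (hg : MemLp g 2 (volume.restrict (Ι c d))) :
    ‖∫ u in c..d, g u‖ ^ 2 ≤ |d - c| * ∫ u in Ι c d, ‖g u‖ ^ 2 := by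
  have : IsFiniteMeasure (volume.restrict (Ι c d)) := by
    rw [uIoc]; infer_instance
  rw [intervalIntegral.norm_integral_eq_norm_integral_uIoc]
  have hvol : volume.real (Ι c d) = |d - c| := by
    rw [measureReal_def, Real.volume_uIoc, ENNReal.toReal_ofReal (abs_nonneg _)]
  simpa [measureReal_restrict_apply_univ, hvol] using norm_integral_sq_le_measureReal_mul hg

theorem norm_sq_le_of_sub_eq_intervalIntegral {h g : ℝ → E} {c d t : ℝ} (hcd : c < d)
    (ht : t ∈ Icc c d) (hg : MemLp g 2 (volume.restrict (Ioc c d)))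
    (hh : IntervalIntegrable (fun s => ‖h s‖ ^ 2) volume c d)
    (hac : ∀ s ∈ Icc c d, h s - h t = ∫ u in t..s, g u) :
    ‖h t‖ ^ 2 ≤ 2 / (d - c) * (∫ s in c..d, ‖h s‖ ^ 2) + (d - c) * ∫ s in c..d, ‖g s‖ ^ 2 := by
  set G := ∫ s in c..d, ‖g s‖ ^ 2
  have hG : IntegrableOn (fun s => ‖g s‖ ^ 2) (Ioc c d) := hg.integrable_norm_pow two_ne_zero
  have hpoint : ∀ s ∈ Icc c d, ‖h t‖ ^ 2 ≤ 2 * ‖h s‖ ^ 2 + 2 * G * |s - t| := by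
    intro s hs
    have hsub : Ι t s ⊆ Ioc c d := Ioc_subset_Ioc (le_min ht.1 hs.1) (max_le ht.2 hs.2)
    have hcs : ‖∫ u in t..s, g u‖ ^ 2 ≤ |s - t| * G := by
      refine (norm_intervalIntegral_sq_le
        (hg.mono_measure (Measure.restrict_mono hsub le_rfl))).trans ?_
      gcongr
      calc ∫ u in Ι t s, ‖g u‖ ^ 2
          ≤ ∫ u in Ioc c d, ‖g u‖ ^ 2 :=
            setIntegral_mono_set hG (ae_of_all _ fun _ => by positivity) hsub.eventuallyLE
        _ = G := (intervalIntegral.integral_of_le hcd.le).symm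
    have htri : ‖h t‖ ≤ ‖h s‖ + ‖∫ u in t..s, g u‖ := by
      rw [← hac s hs]
      simpa using norm_sub_le (h s) (h s - h t)
    nlinarith [sq_nonneg (‖h s‖ - ‖∫ u in t..s, g u‖), norm_nonneg (h t)]
  -- average the pointwise bound over `s ∈ [c, d]`
  have habs : IntervalIntegrable (fun s => 2 * G * |s - t|) volume c d :=
    Continuous.intervalIntegrable (by fun_prop) _ _
  have hint := intervalIntegral.integral_mono_on hcd.le intervalIntegrable_const
    ((hh.const_mul 2).add habs) hpoint
  rw [intervalIntegral.integral_const, intervalIntegral.integral_add (hh.const_mul 2) habs,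
    intervalIntegral.integral_const_mul, intervalIntegral.integral_const_mul,
    integral_abs_sub_eq ht, smul_eq_mul] at hint
  have hsq : (t - c) ^ 2 + (d - t) ^ 2 ≤ (d - c) ^ 2 := by nlinarith [ht.1, ht.2]
  have hGnn : 0 ≤ G := intervalIntegral.integral_nonneg hcd.le fun _ _ => by positivity
  have hdc : 0 < d - c := sub_pos.2 hcd
  refine le_of_mul_le_mul_left ?_ hdc
  calc (d - c) * ‖h t‖ ^ 2 ≤ 2 * (∫ s in c..d, ‖h s‖ ^ 2) + (d - c) ^ 2 * G := by nlinarith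
    _ = (d - c) * (2 / (d - c) * (∫ s in c..d, ‖h s‖ ^ 2) + (d - c) * G) := by
        field_simp

theorem norm_sq_le_of_sub_eq_intervalIntegral_of_le {h g : ℝ → E} {c d r t : ℝ} (hr : 0 < r)
    (hrd : r ≤ d - c) (ht : t ∈ Icc c d) (hg : MemLp g 2 (volume.restrict (Ioc c d)))
    (hh : IntervalIntegrable (fun s => ‖h s‖ ^ 2) volume c d)
    (hac : ∀ x ∈ Icc c d, ∀ y ∈ Icc c d, h x - h y = ∫ u in y..x, g u) :
    ‖h t‖ ^ 2 ≤ 2 / r * (∫ s in c..d, ‖h s‖ ^ 2) + r * ∫ s in c..d, ‖g s‖ ^ 2 := by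
  -- a window `[c', c' + r] ⊆ [c, d]` containing `t`
  set c' := min t (d - r)
  have hcc' : c ≤ c' := le_min ht.1 (by linarith)
  have hc'd : c' + r ≤ d := by linarith [min_le_right t (d - r)]
  have htc' : t ∈ Icc c' (c' + r) :=
    ⟨min_le_left _ _, by rcases min_choice t (d - r) with h' | h' <;> linarith [ht.2]⟩
  have hwindow : Ioc c' (c' + r) ⊆ Ioc c d := Ioc_subset_Ioc hcc' hc'd
  have hg2 : IntervalIntegrable (fun s => ‖g s‖ ^ 2) volume c d :=
    (intervalIntegrable_iff_integrableOn_Ioc_of_le (by linarith)).2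
      (hg.integrable_norm_pow two_ne_zero)
  have hw := norm_sq_le_of_sub_eq_intervalIntegral (lt_add_of_pos_right c' hr) htc'
    (hg.mono_measure (Measure.restrict_mono hwindow le_rfl))
    (hh.mono_set (by
      rw [uIcc_of_le (by linarith), uIcc_of_le (by linarith)]; exact Icc_subset_Icc hcc' hc'd))
    (fun s hs => hac s ⟨hcc'.trans hs.1, hs.2.trans hc'd⟩ t ht)
  rw [add_sub_cancel_left] at hw
  refine hw.trans ?_
  gcongr
  · exact intervalIntegral.integral_mono_interval hcc' (by linarith) hc'd
      (ae_of_all _ fun _ => by positivity) hh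
  · exact intervalIntegral.integral_mono_interval hcc' (by linarith) hc'd
      (ae_of_all _ fun _ => by positivity) hg2

theorem sub_eq_intervalIntegral_of_eq_add_intervalIntegral {h g : ℝ → E} {c d : ℝ}
    (hg : IntervalIntegrable g volume c d)
    (hac : ∀ x ∈ Icc c d, h x = h c + ∫ u in c..x, g u) :
    ∀ x ∈ Icc c d, ∀ y ∈ Icc c d, h x - h y = ∫ u in y..x, g u := by
  intro x hx y hy
  rw [hac x hx, hac y hy, add_sub_add_left_eq_sub]
  exact intervalIntegral.integral_interval_sub_left
    (hg.mono_set (uIcc_subset_uIcc_left (Icc_subset_uIcc hx)))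
    (hg.mono_set (uIcc_subset_uIcc_left (Icc_subset_uIcc hy)))

theorem continuousOn_of_eq_add_intervalIntegral_s6 {h g : ℝ → E} {c d : ℝ}
    (hg : IntervalIntegrable g volume c d)
    (hac : ∀ x ∈ Icc c d, h x = h c + ∫ u in c..x, g u) : ContinuousOn h (Icc c d) :=
  ((continuousOn_const.add (intervalIntegral.continuousOn_primitive_interval
    ((intervalIntegrable_iff' (by finiteness)).1 hg))).mono Icc_subset_uIcc).congr hac

end

theorem integral_norm_mul_sq_le {α 𝕜 : Type*} [MeasurableSpace α] [NormedRing 𝕜]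
    {μ : Measure α} {V h : α → 𝕜} {M : ℝ} (hV : MemLp V 2 μ) (hh : ∀ᵐ x ∂μ, ‖h x‖ ^ 2 ≤ M) :
    ∫ x, ‖V x * h x‖ ^ 2 ∂μ ≤ (∫ x, ‖V x‖ ^ 2 ∂μ) * M := by
  rw [← integral_mul_const]
  refine integral_mono_of_nonneg (ae_of_all _ fun _ => by positivity)
    ((hV.integrable_norm_pow two_ne_zero).mul_const M) ?_
  filter_upwards [hh] with x hx
  calc ‖V x * h x‖ ^ 2 ≤ (‖V x‖ * ‖h x‖) ^ 2 := by gcongr; exact norm_mul_le _ _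
    _ = ‖V x‖ ^ 2 * ‖h x‖ ^ 2 := mul_pow _ _ _
    _ ≤ ‖V x‖ ^ 2 * M := by gcongr

theorem potential_segment_estimate_general (a l : ℝ) (ha : 0 < a) (hal : a ≤ l)
    (V h g : ℝ → ℂ)
    (hV : MemLp V 2 (volume.restrict (Ioo 0 l)))
    (hg : MemLp g 2 (volume.restrict (Ioo 0 l)))
    (hac : ∀ x ∈ Icc (0:ℝ) l, h x = h 0 + ∫ t in (0:ℝ)..x, g t) :
    (∫ t in (0:ℝ)..l, ‖V t * h t‖ ^ 2) ≤
      (∫ t in (0:ℝ)..l, ‖V t‖ ^ 2) *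
        ((a / 2) * (∫ t in (0:ℝ)..l, ‖g t‖ ^ 2)
          + (4 / a) * (∫ t in (0:ℝ)..l, ‖h t‖ ^ 2)) := by
  have hl : 0 ≤ l := ha.le.trans hal
  rw [Measure.restrict_congr_set Ioo_ae_eq_Ioc] at hV hg
  have hgi : IntervalIntegrable g volume 0 l :=
    (intervalIntegrable_iff_integrableOn_Ioc_of_le hl).2 (hg.integrable one_le_two)
  have hh2 : IntervalIntegrable (fun s => ‖h s‖ ^ 2) volume 0 l :=
    ((continuousOn_of_eq_add_intervalIntegral_s6 hgi hac).norm.pow 2).intervalIntegrable_of_Icc hl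
  have hbound : ∀ t ∈ Icc 0 l, ‖h t‖ ^ 2 ≤
      (a / 2) * (∫ t in (0:ℝ)..l, ‖g t‖ ^ 2) + (4 / a) * (∫ t in (0:ℝ)..l, ‖h t‖ ^ 2) := by
    intro t ht
    refine (norm_sq_le_of_sub_eq_intervalIntegral_of_le (half_pos ha) (by linarith) ht hg hh2
      (sub_eq_intervalIntegral_of_eq_add_intervalIntegral hgi hac)).trans_eq ?_
    ring
  rw [intervalIntegral.integral_of_le hl, intervalIntegral.integral_of_le hl]
  exact integral_norm_mul_sq_le hV ((ae_restrict_iff' measurableSet_Ioc).2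
    (ae_of_all _ fun t ht => hbound t (Ioc_subset_Icc_self ht)))

/-- **Single-segment potential estimate.** For `0 < a ≤ l ≤ 2a`, `V ∈ L²(0,l)` and `h`
absolutely continuous on `[0,l]` with derivative `g ∈ L²(0,l)`,
`∫₀ˡ |V h|² ≤ (∫₀ˡ |V|²) ((a/2) ∫₀ˡ |g|² + (4/a) ∫₀ˡ |h|²)`. -/
theorem potential_segment_estimate (a l : ℝ) (ha : 0 < a) (hal : a ≤ l) (hl : l ≤ 2 * a)
    (V h g : ℝ → ℂ)
    (hV : MemLp V 2 (volume.restrict (Ioo 0 l)))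
    (hg : MemLp g 2 (volume.restrict (Ioo 0 l)))
    (hac : ∀ x ∈ Icc (0:ℝ) l, h x = h 0 + ∫ t in (0:ℝ)..x, g t) :
    (∫ t in (0:ℝ)..l, ‖V t * h t‖ ^ 2) ≤
      (∫ t in (0:ℝ)..l, ‖V t‖ ^ 2) *
        ((a / 2) * (∫ t in (0:ℝ)..l, ‖g t‖ ^ 2)
          + (4 / a) * (∫ t in (0:ℝ)..l, ‖h t‖ ^ 2)) :=
  potential_segment_estimate_general a l ha hal V h g hV hg hac
end

section
/- Let (X,d) be a metric space, μ a Borel measure on X, and x₀ ∈ X such that r ≤ μ(B(x₀,r)) < ∞ for every r > 0, where B(x₀,r) denotes the open ball of radius r around x₀. Let ε > 0 and define w : X → ℝ by w(x) = μ(B(x₀, d(x,x₀)+1))^{1+ε}. Then w(x) ≥ 1 for all x ∈ X and ∫_X w(x)^{−2} dμ(x) < ∞. -/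
/-!
Split `X` into the annuli `n ≤ d(x, x₀) < n + 1`. On the `n`-th annulus the integrand
`V(d(x, x₀) + 1)^{-(1+s)}`, with `V(r) = μ(B(x₀, r))` and `s = 1 + 2ε`, is at most
`V(n + 1)^{-(1+s)}`, while the annulus has measure at most `V(n + 1)`; so its contribution is at
most `V(n + 1)^{-s} ≤ (n + 1)^{-s}`, and these bounds are summable because `s > 1`.
-/

open MeasureTheory Set Metric
open scoped ENNReal

theorem ENNReal.tsum_ofReal_natCast_add_one_rpow_neg_lt_top {s : ℝ} (hs : 1 < s) :
    ∑' n : ℕ, ENNReal.ofReal ((n + 1 : ℝ) ^ (-s)) < ∞ := by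
  have hsum : Summable fun n : ℕ => (n + 1 : ℝ) ^ (-s) := by
    simpa using (summable_nat_add_iff 1).2 (Real.summable_nat_rpow.2 (neg_lt_neg hs))
  rw [← ENNReal.ofReal_tsum_of_nonneg (fun n => by positivity) hsum]
  exact ENNReal.ofReal_lt_top

section

variable {X : Type*} [MetricSpace X]

theorem Metric.iUnion_ball_natCast_succ_diff_ball (x₀ : X) :
    ⋃ n : ℕ, ball x₀ (n + 1) \ ball x₀ n = univ := by
  refine eq_univ_of_forall fun x => mem_iUnion.2 ⟨⌊dist x x₀⌋₊, ?_, ?_⟩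
  · exact mem_ball.2 (Nat.lt_floor_add_one _)
  · exact fun hx => (Nat.floor_le dist_nonneg).not_gt (mem_ball.1 hx)

variable [MeasurableSpace X] {μ : Measure X} {x₀ : X}

theorem le_toReal_measure_ball {r : ℝ} (hlow : ENNReal.ofReal r ≤ μ (ball x₀ r))
    (hfin : μ (ball x₀ r) ≠ ∞) : r ≤ (μ (ball x₀ r)).toReal :=
  (ENNReal.ofReal_le_iff_le_toReal hfin).1 hlow

variable [OpensMeasurableSpace X]

theorem lintegral_le_tsum_mul_measure_ball_succ_diff_ball {f : X → ℝ≥0∞} {c : ℕ → ℝ≥0∞}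
    (hf : ∀ n : ℕ, ∀ x ∈ ball x₀ (n + 1) \ ball x₀ n, f x ≤ c n) :
    ∫⁻ x, f x ∂μ ≤ ∑' n : ℕ, c n * μ (ball x₀ (n + 1) \ ball x₀ n) :=
  calc ∫⁻ x, f x ∂μ = ∫⁻ x in ⋃ n : ℕ, ball x₀ (n + 1) \ ball x₀ n, f x ∂μ := by
        rw [iUnion_ball_natCast_succ_diff_ball, setLIntegral_univ]
    _ ≤ ∑' n : ℕ, ∫⁻ x in ball x₀ (n + 1) \ ball x₀ n, f x ∂μ := lintegral_iUnion_le _ _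
    _ ≤ ∑' n : ℕ, c n * μ (ball x₀ (n + 1) \ ball x₀ n) := ENNReal.tsum_le_tsum fun n =>
        (setLIntegral_mono' (measurableSet_ball.diff measurableSet_ball) (hf n)).trans_eq
          (setLIntegral_const _ _)

theorem measurable_measure_ball_dist_add (x₀ : X) (a : ℝ) :
    Measurable fun x => μ (ball x₀ (dist x x₀ + a)) :=
  have hmono : Monotone fun r : ℝ => μ (ball x₀ (r + a)) := fun _ _ hrs =>
    measure_mono (ball_subset_ball (by linarith))
  hmono.measurable.comp (continuous_id.dist continuous_const).measurable

theorem integrable_toReal_measure_ball_dist_add_one_rpow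
    (hμ : ∀ r : ℝ, 0 < r → ENNReal.ofReal r ≤ μ (ball x₀ r) ∧ μ (ball x₀ r) < ∞)
    {s : ℝ} (hs : 1 < s) :
    Integrable (fun x => (μ (ball x₀ (dist x x₀ + 1))).toReal ^ (-(1 + s))) μ := by
  set V : ℝ → ℝ := fun r => (μ (ball x₀ r)).toReal
  have hV_ge (n : ℕ) : (n + 1 : ℝ) ≤ V (n + 1) :=
    le_toReal_measure_ball (hμ _ n.cast_add_one_pos).1 (hμ _ n.cast_add_one_pos).2.ne
  have hV_pos (n : ℕ) : 0 < V (n + 1) := n.cast_add_one_pos.trans_le (hV_ge n)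
  have hV_mono (n : ℕ) {r : ℝ} (hr : n ≤ r) : V (n + 1) ≤ V (r + 1) :=
    ENNReal.toReal_mono (hμ _ (by linarith [n.cast_nonneg (α := ℝ)])).2.ne
      (measure_mono (ball_subset_ball (by linarith)))
  have hpointwise (n : ℕ) (x : X) (hx : x ∈ ball x₀ (n + 1) \ ball x₀ n) :
      ENNReal.ofReal (V (dist x x₀ + 1) ^ (-(1 + s))) ≤ ENNReal.ofReal (V (n + 1) ^ (-(1 + s))) :=
    ENNReal.ofReal_le_ofReal <| Real.rpow_le_rpow_of_nonpos (hV_pos n)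
      (hV_mono n (not_lt.1 (mem_ball.not.1 hx.2))) (by linarith)
  have hannulus (n : ℕ) : ENNReal.ofReal (V (n + 1) ^ (-(1 + s))) *
      μ (ball x₀ (n + 1) \ ball x₀ n) ≤ ENNReal.ofReal ((n + 1 : ℝ) ^ (-s)) :=
    calc _ ≤ ENNReal.ofReal (V (n + 1) ^ (-(1 + s))) * ENNReal.ofReal (V (n + 1)) := by
          rw [ENNReal.ofReal_toReal (hμ _ n.cast_add_one_pos).2.ne]
          exact mul_le_mul_right (measure_mono sdiff_subset) _
      _ = ENNReal.ofReal (V (n + 1) ^ (-s)) := by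
          rw [← ENNReal.ofReal_mul (by positivity), ← Real.rpow_add_one (hV_pos n).ne']
          ring_nf
      _ ≤ ENNReal.ofReal ((n + 1 : ℝ) ^ (-s)) :=
          ENNReal.ofReal_le_ofReal <|
            Real.rpow_le_rpow_of_nonpos n.cast_add_one_pos (hV_ge n) (by linarith)
  refine ⟨((measurable_measure_ball_dist_add x₀ 1).ennreal_toReal.pow_const _).aestronglyMeasurable,
    ?_⟩
  rw [hasFiniteIntegral_iff_ofReal (.of_forall fun x => by positivity)]
  calc _ ≤ ∑' n : ℕ, ENNReal.ofReal (V (n + 1) ^ (-(1 + s))) *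
          μ (ball x₀ (n + 1) \ ball x₀ n) :=
        lintegral_le_tsum_mul_measure_ball_succ_diff_ball hpointwise
    _ ≤ ∑' n : ℕ, ENNReal.ofReal ((n + 1 : ℝ) ^ (-s)) := ENNReal.tsum_le_tsum hannulus
    _ < ∞ := ENNReal.tsum_ofReal_natCast_add_one_rpow_neg_lt_top hs

end

/-- **An admissible weight function.** If `μ(B(x₀,r)) ≥ r` is finite for all `r > 0`
and `w x = μ(B(x₀, d(x,x₀)+1))^{1+ε}`, then `w ≥ 1` and `w⁻² ∈ L¹(μ)`. -/
theorem weight_function (X : Type*) [MetricSpace X] [MeasurableSpace X] [BorelSpace X]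
    (μ : Measure X) (x₀ : X)
    (hμ : ∀ r : ℝ, 0 < r →
      ENNReal.ofReal r ≤ μ (Metric.ball x₀ r) ∧ μ (Metric.ball x₀ r) < ⊤)
    (ε : ℝ) (hε : 0 < ε) (w : X → ℝ)
    (hw : ∀ x, w x = (μ (Metric.ball x₀ (dist x x₀ + 1))).toReal ^ (1 + ε)) :
    (∀ x, 1 ≤ w x) ∧ Integrable (fun x => (w x ^ 2)⁻¹) μ := by
  refine ⟨fun x => ?_, ?_⟩
  · have hpos : 0 < dist x x₀ + 1 := by positivity
    have hV : dist x x₀ + 1 ≤ (μ (ball x₀ (dist x x₀ + 1))).toReal :=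
      le_toReal_measure_ball (hμ _ hpos).1 (hμ _ hpos).2.ne
    rw [hw]
    exact Real.one_le_rpow (by linarith [dist_nonneg (x := x) (y := x₀)]) (by linarith)
  · convert integrable_toReal_measure_ball_dist_add_one_rpow hμ (s := 1 + 2 * ε) (by linarith)
      using 1
    funext x
    rw [hw, ← Real.rpow_natCast, ← Real.rpow_mul ENNReal.toReal_nonneg,
      ← Real.rpow_neg ENNReal.toReal_nonneg]
    ring_nf
end

section
/- Let (X, 𝔄, μ) be a σ-finite measure space, c > 0, and A : L²(μ;ℂ) → L²(μ;ℂ) a bounded linear operator such that for every f ∈ L²(μ), the image Af has an essentially bounded representative with essential supremum at most c·‖f‖_{L²}. Let (eᵢ)_{i∈ℕ} be an orthonormal sequence in L²(μ) and for each i let fᵢ be a representative of A eᵢ. Then for μ-almost every x ∈ X one has Σ_{i=1}^∞ |fᵢ(x)|² ≤ c². -/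
/-!
For fixed coefficients `a`, the function `∑ aᵢ Fᵢ` represents `A (∑ aᵢ eᵢ)`, so
`|∑ aᵢ Fᵢ(x)| ≤ c ‖∑ aᵢ eᵢ‖ = c (∑ |aᵢ|²)^{1/2}` off a null set depending on `a`. Both sides
are continuous in `a`, so testing a countable dense set of coefficient sequences yields a single
null set outside which the inequality holds for every `a`. At such a point `x`, the choice
`aᵢ = conj Fᵢ(x)` gives `∑ |Fᵢ(x)|² ≤ c (∑ |Fᵢ(x)|²)^{1/2}` for every partial sum.
-/

open MeasureTheory Finset

theorem ae_forall_of_isClosed {X α : Type*} [MeasurableSpace X] {μ : Measure X}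
    [TopologicalSpace α] [TopologicalSpace.SeparableSpace α] {P : α → X → Prop}
    (hP : ∀ a, ∀ᵐ x ∂μ, P a x) (hclosed : ∀ x, IsClosed {a | P a x}) :
    ∀ᵐ x ∂μ, ∀ a, P a x := by
  obtain ⟨D, hD_countable, hD_dense⟩ := TopologicalSpace.exists_countable_dense α
  filter_upwards [(ae_ball_iff hD_countable).2 fun a _ => hP a] with x hx a
  exact (hclosed x).closure_subset_iff.2 hx (hD_dense.closure_eq ▸ Set.mem_univ a)

theorem Orthonormal.norm_sum_smul_sq {𝕜 E ι : Type*} [RCLike 𝕜] [NormedAddCommGroup E]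
    [InnerProductSpace 𝕜 E] {e : ι → E} (he : Orthonormal 𝕜 e) (a : ι → 𝕜) (s : Finset ι) :
    ‖∑ i ∈ s, a i • e i‖ ^ 2 = ∑ i ∈ s, ‖a i‖ ^ 2 := by
  rw [← RCLike.ofReal_inj (K := 𝕜), RCLike.ofReal_pow, ← inner_self_eq_norm_sq_to_K,
    he.inner_sum]
  push_cast
  exact sum_congr rfl fun i _ => RCLike.conj_mul (a i)

theorem Orthonormal.sum_norm_sq_le_of_forall_norm_sum_mul_le {𝕜 E ι : Type*} [RCLike 𝕜]
    [NormedAddCommGroup E] [InnerProductSpace 𝕜 E] {e : ι → E} (he : Orthonormal 𝕜 e)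
    {z : ι → 𝕜} {c : ℝ} {s : Finset ι}
    (h : ∀ a : ι → 𝕜, ‖∑ i ∈ s, a i * z i‖ ≤ c * ‖∑ i ∈ s, a i • e i‖) :
    ∑ i ∈ s, ‖z i‖ ^ 2 ≤ c ^ 2 := by
  set S := ∑ i ∈ s, ‖z i‖ ^ 2
  have hS : 0 ≤ S := sum_nonneg fun i _ => sq_nonneg _
  have hlhs : ‖∑ i ∈ s, (starRingEnd 𝕜) (z i) * z i‖ = S := by
    simp_rw [RCLike.conj_mul, ← RCLike.ofReal_pow, ← RCLike.ofReal_sum]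
    exact RCLike.norm_of_nonneg hS
  have hrhs : ‖∑ i ∈ s, (starRingEnd 𝕜) (z i) • e i‖ ^ 2 = S := by
    simp [he.norm_sum_smul_sq, S]
  have hbound := h fun i => (starRingEnd 𝕜) (z i)
  rw [hlhs] at hbound
  nlinarith [norm_nonneg (∑ i ∈ s, (starRingEnd 𝕜) (z i) • e i)]

theorem ae_norm_sum_mul_le {X 𝕜 V 𝓕 ι : Type*} [MeasurableSpace X] {μ : Measure X} [RCLike 𝕜]
    [NormedAddCommGroup V] [Module 𝕜 V] {p : ENNReal}
    [FunLike 𝓕 V (Lp 𝕜 p μ)] [LinearMapClass 𝓕 𝕜 V (Lp 𝕜 p μ)] {c : ℝ} (A : 𝓕)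
    (hA : ∀ v, ∀ᵐ x ∂μ, ‖A v x‖ ≤ c * ‖v‖) {e : ι → V} {F : ι → X → 𝕜}
    (hF : ∀ i, F i =ᵐ[μ] A (e i)) (a : ι → 𝕜) (s : Finset ι) :
    ∀ᵐ x ∂μ, ‖∑ i ∈ s, a i * F i x‖ ≤ c * ‖∑ i ∈ s, a i • e i‖ := by
  have hterms : ∀ᵐ x ∂μ, ∀ i ∈ s, A (a i • e i) x = a i * F i x := by
    refine (Filter.eventually_all_finset s).2 fun i _ => ?_
    filter_upwards [map_smul A (a i) (e i) ▸ Lp.coeFn_smul (a i) (A (e i)), hF i] with x hx hFx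
    rw [hx, Pi.smul_apply, hFx, smul_eq_mul]
  filter_upwards [hA (∑ i ∈ s, a i • e i),
    map_sum A (fun i => a i • e i) s ▸ Lp.coeFn_fun_finsetSum s _, hterms] with x hx hsum hterms
  rwa [hsum, sum_congr rfl hterms] at hx

theorem pointwise_ell2_bound_general {X : Type*} [MeasurableSpace X] (μ : Measure X)
    (c : ℝ)
    (A : Lp ℂ 2 μ →L[ℂ] Lp ℂ 2 μ)
    (hA : ∀ f : Lp ℂ 2 μ, ∀ᵐ x ∂μ, ‖(A f : Lp ℂ 2 μ) x‖ ≤ c * ‖f‖)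
    (e : ℕ → Lp ℂ 2 μ) (he : Orthonormal ℂ e)
    (F : ℕ → X → ℂ) (hF : ∀ i, F i =ᵐ[μ] (A (e i) : Lp ℂ 2 μ)) :
    ∀ᵐ x ∂μ, ∑' i : ℕ, ‖F i x‖ ^ 2 ≤ c ^ 2 := by
  have hcoeff : ∀ᵐ x ∂μ, ∀ n, ∀ a : ℕ → ℂ,
      ‖∑ i ∈ range n, a i * F i x‖ ≤ c * ‖∑ i ∈ range n, a i • e i‖ :=
    ae_all_iff.2 fun n => ae_forall_of_isClosed (fun a => ae_norm_sum_mul_le A hA hF a _)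
      fun x => isClosed_le (by fun_prop) (by fun_prop)
  filter_upwards [hcoeff] with x hx
  exact Real.tsum_le_of_sum_range_le (fun i => sq_nonneg _)
    fun n => he.sum_norm_sq_le_of_forall_norm_sum_mul_le (hx n)

/-- **Pointwise ℓ² bound for an L²→L^∞ bounded operator.** If `A : L²(μ) → L²(μ)` maps
into `L^∞` with `‖A f‖_∞ ≤ c ‖f‖₂`, and `(eᵢ)` is an orthonormal sequence with
representatives `Fᵢ` of `A eᵢ`, then `Σᵢ |Fᵢ(x)|² ≤ c²` for a.e. `x`. -/
theorem pointwise_ell2_bound {X : Type*} [MeasurableSpace X] (μ : Measure X)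
    [SigmaFinite μ] (c : ℝ) (hc : 0 < c)
    (A : Lp ℂ 2 μ →L[ℂ] Lp ℂ 2 μ)
    (hA : ∀ f : Lp ℂ 2 μ, ∀ᵐ x ∂μ, ‖(A f : Lp ℂ 2 μ) x‖ ≤ c * ‖f‖)
    (e : ℕ → Lp ℂ 2 μ) (he : Orthonormal ℂ e)
    (F : ℕ → X → ℂ) (hF : ∀ i, F i =ᵐ[μ] (A (e i) : Lp ℂ 2 μ)) :
    ∀ᵐ x ∂μ, ∑' i : ℕ, ‖F i x‖ ^ 2 ≤ c ^ 2 :=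
  pointwise_ell2_bound_general μ c A hA e he F hF
end

section
/- Let E be a finite-dimensional complex inner product space, P : E → E an orthogonal projection, and L : E → E a self-adjoint linear map with L(ker P) ⊆ ker P. Let φ, ψ ∈ E and suppose that for all x, y ∈ E satisfying P x = 0 and L x + (I − P) y = 0 one has ⟨y, φ⟩ = ⟨x, ψ⟩. Then P φ = 0 and L φ + (I − P) ψ = 0. -/
/-!
Testing the identity with the boundary data `(0, P z)` shows `φ ⊥ range P = ker P`. Testing it
with `(x, -L x)` for `x ∈ ker P`, admissible because `L` preserves `ker P`, shows that
`L φ + (ψ - P ψ)` is orthogonal to `ker P`; since that vector also lies in `ker P`, it vanishes.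
-/

open scoped ComplexInnerProductSpace InnerProductSpace

namespace LinearMap

variable {𝕜 E : Type*} [RCLike 𝕜] [NormedAddCommGroup E] [InnerProductSpace 𝕜 E]
  {P L : E →ₗ[𝕜] E} {φ ψ : E}

theorem mem_orthogonal_range_of_forall_inner_eq (hP2 : ∀ x, P (P x) = P x)
    (hyp : ∀ x y : E, P x = 0 → L x + (y - P y) = 0 → ⟪y, φ⟫_𝕜 = ⟪x, ψ⟫_𝕜) :
    φ ∈ (range P)ᗮ := by
  rw [Submodule.mem_orthogonal]
  rintro _ ⟨z, rfl⟩
  simpa using hyp 0 (P z) (map_zero P) (by simp [hP2])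

theorem add_sub_mem_orthogonal_ker (hPsa : P.IsSymmetric) (hLsa : L.IsSymmetric)
    (hLker : ∀ x, P x = 0 → P (L x) = 0)
    (hyp : ∀ x y : E, P x = 0 → L x + (y - P y) = 0 → ⟪y, φ⟫_𝕜 = ⟪x, ψ⟫_𝕜) :
    L φ + (ψ - P ψ) ∈ (ker P)ᗮ := by
  rw [Submodule.mem_orthogonal]
  intro x hx
  rw [mem_ker] at hx
  have hxψ : ⟪x, ψ⟫_𝕜 = -⟪x, L φ⟫_𝕜 := by
    rw [← hyp x (-L x) hx (by simp [hLker x hx]), inner_neg_left, hLsa]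
  rw [inner_add_right, inner_sub_right, ← hPsa, hx, inner_zero_left, hxψ]
  ring

end LinearMap

open LinearMap in
theorem boundary_condition_of_generalized_eigenfunction_general
    {E : Type*} [NormedAddCommGroup E] [InnerProductSpace ℂ E]
    (P L : E →ₗ[ℂ] E)
    (hP2 : ∀ x, P (P x) = P x)
    (hPsa : ∀ x y, ⟪P x, y⟫ = ⟪x, P y⟫)
    (hLsa : ∀ x y, ⟪L x, y⟫ = ⟪x, L y⟫)
    (hLker : ∀ x, P x = 0 → P (L x) = 0)
    (φ ψ : E)
    (hyp : ∀ x y : E, P x = 0 → L x + (y - P y) = 0 → ⟪y, φ⟫ = ⟪x, ψ⟫) :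
    P φ = 0 ∧ L φ + (ψ - P ψ) = 0 := by
  have hPφ : P φ = 0 := by
    simpa [IsSymmetric.orthogonal_range hPsa] using
      mem_orthogonal_range_of_forall_inner_eq hP2 hyp
  refine ⟨hPφ, ?_⟩
  have h_ker : L φ + (ψ - P ψ) ∈ ker P := by simp [hLker φ hPφ, hP2]
  exact Submodule.disjoint_def.mp (ker P).orthogonal_disjoint _ h_ker
    (add_sub_mem_orthogonal_ker hPsa hLsa hLker hyp)

/-- **Recovering the vertex boundary condition.** Let `P` be an orthogonal projection
and `L` self-adjoint with `L (ker P) ⊆ ker P` on a finite-dimensional complex inner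
product space. If `⟪y, φ⟫ = ⟪x, ψ⟫` for all `x, y` with `P x = 0` and
`L x + (I−P) y = 0`, then `P φ = 0` and `L φ + (I−P) ψ = 0`. -/
theorem boundary_condition_of_generalized_eigenfunction
    {E : Type*} [NormedAddCommGroup E] [InnerProductSpace ℂ E] [FiniteDimensional ℂ E]
    (P L : E →ₗ[ℂ] E)
    (hP2 : ∀ x, P (P x) = P x)
    (hPsa : ∀ x y, ⟪P x, y⟫ = ⟪x, P y⟫)
    (hLsa : ∀ x y, ⟪L x, y⟫ = ⟪x, L y⟫)
    (hLker : ∀ x, P x = 0 → P (L x) = 0)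
    (φ ψ : E)
    (hyp : ∀ x y : E, P x = 0 → L x + (y - P y) = 0 → ⟪y, φ⟫ = ⟪x, ψ⟫) :
    P φ = 0 ∧ L φ + (ψ - P ψ) = 0 :=
  boundary_condition_of_generalized_eigenfunction_general P L hP2 hPsa hLsa hLker φ ψ hyp
end
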